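/- arXiv:2204.12640 — 2 statements merged into one kernel-verified Lean document; each statement's English description precedes it below -/
import Mathlib

section
/- Let p, q ∈ [0, 1/4] and t ∈ [0, π]. Then |θ_p(t) − θ_q(t)| ≤ 7·|p − q|·t, where θ_p(t) := arcsin(p·sin t / r_p(t)) is the argument of the complex number 1 − p + p·e^{it}. -/
/-- The modulus of the complex number `1 - p + p·e^{it}`. -/
noncomputable def rMod (p t : ℝ) : ℝ :=
  Real.sqrt ((1 - p * (1 - Real.cos t)) ^ 2 + p ^ 2 * Real.sin t ^ 2)

/-- The argument of the complex number `1 - p + p·e^{it}` (for `t ∈ [0, π]`). -/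
noncomputable def thetaArg (p t : ℝ) : ℝ :=
  Real.arcsin (p * Real.sin t / rMod p t)

/-!
For `p ≤ 1/4` the real part `1 - p(1 - cos t)` of `1 - p + p·e^{it}` is at least `1/2`, so
`θ_p(t) = arctan (p sin t / (1 - p(1 - cos t)))`. Its derivative in `p` is `sin t / r_p(t)²`,
which is at most `4 sin t ≤ 4 t`; the mean value inequality in `p` then gives the bound.
-/

open Real Set

lemma half_le_one_sub_mul_one_sub_cos {p : ℝ} (t : ℝ) (hp : p ∈ Icc (0 : ℝ) (1 / 4)) :
    1 / 2 ≤ 1 - p * (1 - cos t) := by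
  nlinarith [hp.1, hp.2, neg_one_le_cos t, cos_le_one t]

lemma arcsin_div_sqrt_sq_add_sq {d : ℝ} (hd : 0 < d) (y : ℝ) :
    arcsin (y / √(d ^ 2 + y ^ 2)) = arctan (y / d) := by
  have hsqrt : √(1 + (y / d) ^ 2) = √(d ^ 2 + y ^ 2) / d := by
    rw [show 1 + (y / d) ^ 2 = (d ^ 2 + y ^ 2) / d ^ 2 by field_simp,
      sqrt_div' _ (sq_nonneg d), sqrt_sq hd.le]
  have hpos : 0 < √(d ^ 2 + y ^ 2) := by positivity
  rw [arctan_eq_arcsin, hsqrt]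
  field_simp

lemma thetaArg_eq_arctan {p t : ℝ} (h : 0 < 1 - p * (1 - cos t)) :
    thetaArg p t = arctan (p * sin t / (1 - p * (1 - cos t))) := by
  rw [← arcsin_div_sqrt_sq_add_sq h, thetaArg, rMod, mul_pow]

lemma hasDerivAt_arctan_mul_div_one_sub_mul {s a x : ℝ} (hx : 1 - x * a ≠ 0) :
    HasDerivAt (fun y => arctan (y * s / (1 - y * a)))
      (s / ((1 - x * a) ^ 2 + x ^ 2 * s ^ 2)) x := by
  have hquot : HasDerivAt (fun y => y * s / (1 - y * a))
      ((1 * s * (1 - x * a) - x * s * -(1 * a)) / (1 - x * a) ^ 2) x :=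
    ((hasDerivAt_id x).mul_const s).div (((hasDerivAt_id x).mul_const a).const_sub 1) hx
  refine ((hasDerivAt_arctan _).comp x hquot).congr_deriv ?_
  field_simp
  ring

lemma abs_arctan_sub_arctan_le {p q t : ℝ} (hp : p ∈ Icc (0 : ℝ) (1 / 4))
    (hq : q ∈ Icc (0 : ℝ) (1 / 4)) (hsin : 0 ≤ sin t) :
    |arctan (p * sin t / (1 - p * (1 - cos t))) - arctan (q * sin t / (1 - q * (1 - cos t)))|
      ≤ 4 * sin t * |p - q| := by
  refine (convex_Icc _ _).norm_image_sub_le_of_norm_hasDerivWithin_le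
    (fun x hx => (hasDerivAt_arctan_mul_div_one_sub_mul ?_).hasDerivWithinAt)
    (fun x hx => ?_) hq hp
  · linarith [half_le_one_sub_mul_one_sub_cos t hx]
  · have hre := half_le_one_sub_mul_one_sub_cos t hx
    have hmod : 1 / 4 ≤ (1 - x * (1 - cos t)) ^ 2 + x ^ 2 * sin t ^ 2 := by
      nlinarith [sq_nonneg (x * sin t)]
    rw [norm_div, Real.norm_of_nonneg hsin, Real.norm_of_nonneg (by linarith),
      div_le_iff₀ (by linarith)]
    nlinarith

theorem stmt_thm (p q t : ℝ) (hp : p ∈ Set.Icc (0 : ℝ) (1/4)) (hq : q ∈ Set.Icc (0 : ℝ) (1/4))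
    (ht : t ∈ Set.Icc (0 : ℝ) Real.pi) :
    |thetaArg p t - thetaArg q t| ≤ 7 * |p - q| * t := by
  have hre : ∀ x ∈ Icc (0 : ℝ) (1 / 4), 0 < 1 - x * (1 - cos t) := fun x hx => by
    linarith [half_le_one_sub_mul_one_sub_cos t hx]
  have hsin : 0 ≤ sin t := sin_nonneg_of_nonneg_of_le_pi ht.1 ht.2
  rw [thetaArg_eq_arctan (hre p hp), thetaArg_eq_arctan (hre q hq)]
  calc _ ≤ 4 * sin t * |p - q| := abs_arctan_sub_arctan_le hp hq hsin
    _ ≤ 7 * |p - q| * t := by nlinarith [sin_le ht.1, abs_nonneg (p - q)]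
end

section
/- Let p, q ∈ [0, 1/4] and let n ≥ 16 be a natural number with n(p+q) > 1/2 and n·|p−q| ≥ √(n(p+q)). Suppose X, X' ~ Bin(n,p) and Y, Y' ~ Bin(n,q) are mutually independent. Then Δ := E[|X−Y| + |X'−Y'| − |X−X'| − |Y−Y'|] ≥ (1/16)·n·|p−q|. -/
open MeasureTheory ProbabilityTheory

/-- The binomial distribution `Bin(n, p)`, as a measure on `ℝ` supported on `{0, 1, …, n}`. -/
noncomputable def binomialMeasure (n : ℕ) (p : ℝ) : Measure ℝ :=
  ∑ k ∈ Finset.range (n + 1),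
    ENNReal.ofReal ((n.choose k : ℝ) * p ^ k * (1 - p) ^ (n - k)) • Measure.dirac (k : ℝ)

/-!
Write `D = n |p - q|`, `A = E|X - X'|` and `B = E|Y - Y'|`. By independence
`Δ = 2 E|X - Y| - A - B`, and `E|X - Y| ≥ |E (X - Y)| = D`.

For `A`: the law of `X - X'` is symmetric and unimodal. Indeed, adding one trial convolves it with
the law of `B - B'` for independent Bernoulli(`p`) variables, which is symmetric with at least as
much mass at `0` as at `±1`, and such a convolution preserves unimodality. A symmetric unimodal law
on `ℤ` is a mixture of uniform laws on `{-a, …, a}`, for which `(E|U|)² ≤ (3/4) E U²`; hence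
`A² ≤ (3/4) E (X - X')² = (3/2) n p (1 - p)`. Then `(A + B)² ≤ 2 (A² + B²) ≤ 3 n (p + q) ≤ 3 D²`,
so `Δ ≥ (2 - √3) D ≥ D / 16`.
-/

open Finset
open scoped ENNReal

namespace MeasureTheory.Measure

variable {α β ι : Type*} [MeasurableSpace α] [MeasurableSpace β]

instance sFinite_finsetSum (s : Finset ι) (μ : ι → Measure α) [∀ i, SFinite (μ i)] :
    SFinite (∑ i ∈ s, μ i) := by
  rw [← sum_coe_finset]; infer_instance

theorem prod_finsetSum (μ : Measure α) [SFinite μ] (s : Finset ι) (ν : ι → Measure β)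
    [∀ i, SFinite (ν i)] : μ.prod (∑ i ∈ s, ν i) = ∑ i ∈ s, μ.prod (ν i) := by
  classical
  induction s using Finset.induction_on with
  | empty => simp
  | insert a s ha ih => rw [sum_insert ha, prod_add, ih, sum_insert ha]

theorem finsetSum_prod (s : Finset ι) (μ : ι → Measure α) [∀ i, SFinite (μ i)] (ν : Measure β)
    [SFinite ν] : (∑ i ∈ s, μ i).prod ν = ∑ i ∈ s, (μ i).prod ν := by
  classical
  induction s using Finset.induction_on with
  | empty => simp
  | insert a s ha ih => rw [sum_insert ha, add_prod, ih, sum_insert ha]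

end MeasureTheory.Measure

section FiniteCombinationOfDiracs

variable {α ι : Type*} [MeasurableSpace α] [MeasurableSingletonClass α] {s : Finset ι}
  {c : ι → ℝ≥0∞}

theorem integrable_finsetSum_smul_dirac (hc : ∀ i ∈ s, c i ≠ ∞) (x : ι → α) (f : α → ℝ) :
    Integrable f (∑ i ∈ s, c i • Measure.dirac (x i)) :=
  integrable_finsetSum_measure.2 fun i hi => (integrable_dirac enorm_lt_top).smul_measure (hc i hi)

theorem integral_finsetSum_smul_dirac (hc : ∀ i ∈ s, c i ≠ ∞) (x : ι → α) (f : α → ℝ) :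
    ∫ a, f a ∂(∑ i ∈ s, c i • Measure.dirac (x i)) = ∑ i ∈ s, (c i).toReal * f (x i) := by
  rw [integral_finsetSum_measure fun i hi =>
    (integrable_dirac enorm_lt_top).smul_measure (hc i hi)]
  exact sum_congr rfl fun i _ => by rw [integral_smul_measure, integral_dirac, smul_eq_mul]

end FiniteCombinationOfDiracs

theorem sum_range_sum_range_of_symm {M : Type*} [AddCommGroup M] (F : ℕ → ℕ → M)
    (hF : ∀ j k, F j k = F k j) (N : ℕ) :
    ∑ j ∈ range N, ∑ k ∈ range N, F j k
      = 2 • ∑ j ∈ range N, ∑ k ∈ Ico j N, F j k - ∑ j ∈ range N, F j j := by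
  have hsplit : ∀ j ∈ range N, ∑ k ∈ range N, F j k
      = ∑ k ∈ range j, F j k + (F j j + ∑ k ∈ Ico (j + 1) N, F j k) := fun j hj => by
    rw [← sum_eq_sum_Ico_succ_bot (mem_range.1 hj), sum_range_add_sum_Ico _ (mem_range.1 hj).le]
  have hlower : ∑ j ∈ range N, ∑ k ∈ range j, F j k
      = ∑ j ∈ range N, ∑ k ∈ Ico (j + 1) N, F j k := by
    simpa only [range_eq_Ico, hF] using (sum_Ico_Ico_comm' 0 N fun k j => F j k).symm
  have hupper : ∀ j ∈ range N, ∑ k ∈ Ico j N, F j k = F j j + ∑ k ∈ Ico (j + 1) N, F j k :=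
    fun j hj => sum_eq_sum_Ico_succ_bot (mem_range.1 hj) _
  rw [sum_congr rfl hsplit, sum_congr rfl hupper, sum_add_distrib, hlower, sum_add_distrib]
  abel

theorem sum_range_by_parts_of_eq_zero {R : Type*} [CommRing R] (P g : ℕ → R) {N : ℕ}
    (hN : P N = 0) :
    ∑ k ∈ range N, g k * P k = ∑ a ∈ range N, (P a - P (a + 1)) * ∑ k ∈ range (a + 1), g k := by
  have h := sum_range_by_parts P g (N + 1)
  simp only [smul_eq_mul, add_tsub_cancel_right, hN, zero_mul, zero_sub, sum_range_succ _ N,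
    add_zero] at h
  simp_rw [mul_comm (g _) (P _), h, ← sum_neg_distrib, ← neg_mul, neg_sub]

theorem sq_sum_mul_le_of_antitone {P : ℕ → ℝ} (hP : Antitone P) {N : ℕ} (hN : P N = 0) :
    (∑ k ∈ range N, k * P k) ^ 2
      ≤ 3 / 8 * (2 * ∑ k ∈ range N, P k - P 0) * ∑ k ∈ range N, k ^ 2 * P k := by
  have hd : ∀ a, 0 ≤ P a - P (a + 1) := fun a => sub_nonneg.2 (hP (Nat.le_succ a))
  have sum_id : ∀ a : ℕ, ∑ k ∈ range (a + 1), (k : ℝ) = a * (a + 1) / 2 := by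
    intro a; induction a with
    | zero => simp
    | succ a ih => rw [sum_range_succ, ih]; push_cast; ring
  have sum_sq : ∀ a : ℕ, ∑ k ∈ range (a + 1), (k : ℝ) ^ 2 = a * (a + 1) * (2 * a + 1) / 6 := by
    intro a; induction a with
    | zero => simp
    | succ a ih => rw [sum_range_succ, ih]; push_cast; ring
  have hmass : 2 * ∑ k ∈ range N, P k - P 0 = ∑ a ∈ range N, (P a - P (a + 1)) * (2 * a + 1) := by
    have h := sum_range_by_parts_of_eq_zero P 1 hN
    simp only [one_mul, Pi.one_apply, sum_const, card_range, nsmul_eq_mul, mul_one] at h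
    have hP0 : P 0 = ∑ a ∈ range N, (P a - P (a + 1)) := by rw [sum_range_sub', hN, sub_zero]
    rw [h, hP0, mul_sum, ← sum_sub_distrib]
    push_cast
    exact sum_congr rfl fun a _ => by ring
  rw [hmass, sum_range_by_parts_of_eq_zero P _ hN, sum_range_by_parts_of_eq_zero P _ hN]
  simp only [sum_id, sum_sq]
  rw [mul_comm (3 / 8 : ℝ), mul_assoc, mul_sum]
  -- Cauchy–Schwarz; termwise this is `(E|U|)² ≤ (3/4) E U²` for `U` uniform on `{-a, …, a}`.
  refine sum_sq_le_sum_mul_sum_of_sq_le_mul _ (fun a _ => mul_nonneg (hd a) (by positivity))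
    (fun a _ => mul_nonneg (by norm_num) (mul_nonneg (hd a) (by positivity))) fun a _ => ?_
  nlinarith [mul_nonneg (sq_nonneg (P a - P (a + 1))) (by positivity : (0 : ℝ) ≤ a * (a + 1))]

noncomputable def binomWeight (n : ℕ) (p : ℝ) (k : ℕ) : ℝ := n.choose k * p ^ k * (1 - p) ^ (n - k)

theorem binomWeight_nonneg {n : ℕ} {p : ℝ} (hp0 : 0 ≤ p) (hp1 : p ≤ 1) (k : ℕ) :
    0 ≤ binomWeight n p k := by
  unfold binomWeight
  have : 0 ≤ 1 - p := sub_nonneg.2 hp1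
  positivity

theorem binomWeight_eq_zero_of_lt {n : ℕ} {p : ℝ} {k : ℕ} (h : n < k) : binomWeight n p k = 0 := by
  simp [binomWeight, Nat.choose_eq_zero_of_lt h]

theorem binomWeight_succ_succ (n : ℕ) (p : ℝ) (k : ℕ) :
    binomWeight (n + 1) p (k + 1) = (1 - p) * binomWeight n p (k + 1) + p * binomWeight n p k := by
  rcases lt_trichotomy k n with h | rfl | h
  · obtain ⟨m, rfl⟩ := Nat.exists_eq_add_of_lt h
    simp only [binomWeight, Nat.choose_succ_succ, show k + m + 1 + 1 - (k + 1) = m + 1 by omega,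
      show k + m + 1 - (k + 1) = m by omega, show k + m + 1 - k = m + 1 by omega]
    push_cast
    ring
  · rw [binomWeight_eq_zero_of_lt (Nat.lt_succ_self k)]
    simp only [binomWeight, Nat.choose_self, Nat.sub_self, pow_zero, Nat.cast_one]
    ring
  · rw [binomWeight_eq_zero_of_lt (by omega), binomWeight_eq_zero_of_lt (by omega),
      binomWeight_eq_zero_of_lt h]
    ring

theorem sum_binomWeight_succ_mul (n : ℕ) (p : ℝ) (f : ℕ → ℝ) :
    ∑ j ∈ range (n + 2), binomWeight (n + 1) p j * f j
      = (1 - p) * ∑ j ∈ range (n + 1), binomWeight n p j * f j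
        + p * ∑ j ∈ range (n + 1), binomWeight n p j * f (j + 1) := by
  have h0 : binomWeight (n + 1) p 0 = (1 - p) * binomWeight n p 0 := by
    simp [binomWeight, pow_succ, mul_comm]
  have hext : ∑ j ∈ range (n + 1), binomWeight n p j * f j
      = ∑ j ∈ range (n + 2), binomWeight n p j * f j := by
    rw [sum_range_succ _ (n + 1), binomWeight_eq_zero_of_lt (Nat.lt_succ_self n), zero_mul,
      add_zero]
  rw [sum_range_succ', h0, hext, sum_range_succ' _ (n + 1)]
  simp only [binomWeight_succ_succ, add_mul, sum_add_distrib, mul_assoc, ← mul_sum]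
  ring

theorem eval_bernsteinPolynomial (n k : ℕ) (p : ℝ) :
    (bernsteinPolynomial ℝ n k).eval p = binomWeight n p k := by
  simp [bernsteinPolynomial, binomWeight]

theorem sum_binomWeight (n : ℕ) (p : ℝ) : ∑ k ∈ range (n + 1), binomWeight n p k = 1 := by
  simpa [Polynomial.eval_finsetSum, eval_bernsteinPolynomial] using
    congrArg (Polynomial.eval p) (bernsteinPolynomial.sum ℝ n)

theorem sum_binomWeight_mul_cast (n : ℕ) (p : ℝ) :
    ∑ k ∈ range (n + 1), binomWeight n p k * k = n * p := by
  simpa [Polynomial.eval_finsetSum, eval_bernsteinPolynomial, mul_comm] using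
    congrArg (Polynomial.eval p) (bernsteinPolynomial.sum_smul ℝ n)

theorem sum_binomWeight_mul_sq_sub (n : ℕ) (p : ℝ) :
    ∑ k ∈ range (n + 1), binomWeight n p k * (n * p - k) ^ 2 = n * p * (1 - p) := by
  simpa [Polynomial.eval_finsetSum, eval_bernsteinPolynomial, mul_comm] using
    congrArg (Polynomial.eval p) (bernsteinPolynomial.variance ℝ n)

/-- `binomAutocorr n p m = P(X' - X = m)` for independent `X, X' ~ Bin(n, p)`. -/
noncomputable def binomAutocorr (n : ℕ) (p : ℝ) (m : ℕ) : ℝ :=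
  ∑ j ∈ range (n + 1), binomWeight n p j * binomWeight n p (j + m)

theorem binomAutocorr_eq_zero_of_lt {n : ℕ} {p : ℝ} {m : ℕ} (h : n < m) : binomAutocorr n p m = 0 :=
  sum_eq_zero fun j _ => by rw [binomWeight_eq_zero_of_lt (k := j + m) (by omega), mul_zero]

theorem binomAutocorr_nonneg {n : ℕ} {p : ℝ} (hp0 : 0 ≤ p) (hp1 : p ≤ 1) (m : ℕ) :
    0 ≤ binomAutocorr n p m :=
  sum_nonneg fun _ _ => mul_nonneg (binomWeight_nonneg hp0 hp1 _) (binomWeight_nonneg hp0 hp1 _)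

theorem sum_binomWeight_mul_binomWeight_succ (n : ℕ) (p : ℝ) (m : ℕ) :
    ∑ j ∈ range (n + 1), binomWeight n p j * binomWeight (n + 1) p (j + (m + 1))
      = (1 - p) * binomAutocorr n p (m + 1) + p * binomAutocorr n p m := by
  simp only [binomAutocorr, mul_sum, ← sum_add_distrib]
  refine sum_congr rfl fun j _ => ?_
  rw [← add_assoc, binomWeight_succ_succ, add_assoc]
  ring

theorem binomAutocorr_succ_zero (n : ℕ) (p : ℝ) :
    binomAutocorr (n + 1) p 0
      = ((1 - p) ^ 2 + p ^ 2) * binomAutocorr n p 0 + 2 * p * (1 - p) * binomAutocorr n p 1 := by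
  have hdiag : ∑ j ∈ range (n + 1), binomWeight n p j * binomWeight (n + 1) p j
      = (1 - p) * binomAutocorr n p 0 + p * binomAutocorr n p 1 := by
    have h := sum_binomWeight_succ_mul n p (binomWeight n p)
    rw [sum_range_succ, binomWeight_eq_zero_of_lt (Nat.lt_succ_self n), mul_zero, add_zero] at h
    simp only [binomAutocorr, add_zero, ← h]
    exact sum_congr rfl fun j _ => mul_comm _ _
  have hoff := sum_binomWeight_mul_binomWeight_succ n p 0
  rw [zero_add] at hoff
  simp only [binomAutocorr, add_zero] at hdiag hoff ⊢
  rw [sum_binomWeight_succ_mul, hdiag, hoff]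
  ring

theorem binomAutocorr_succ_succ (n : ℕ) (p : ℝ) (m : ℕ) :
    binomAutocorr (n + 1) p (m + 1) = ((1 - p) ^ 2 + p ^ 2) * binomAutocorr n p (m + 1)
      + p * (1 - p) * (binomAutocorr n p m + binomAutocorr n p (m + 2)) := by
  rw [binomAutocorr, sum_binomWeight_succ_mul]
  simp only [show ∀ j, j + 1 + (m + 1) = j + (m + 1 + 1) from fun j => by omega,
    sum_binomWeight_mul_binomWeight_succ]
  ring

theorem antitone_binomAutocorr {p : ℝ} (hp0 : 0 ≤ p) (hp1 : p ≤ 1) (n : ℕ) :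
    Antitone (binomAutocorr n p) := by
  induction n with
  | zero =>
    refine antitone_nat_of_succ_le fun m => ?_
    rw [binomAutocorr_eq_zero_of_lt (Nat.succ_pos m)]
    exact binomAutocorr_nonneg hp0 hp1 m
  | succ n ih =>
    refine antitone_nat_of_succ_le fun m => ?_
    have hdec : ∀ k, 0 ≤ binomAutocorr n p k - binomAutocorr n p (k + 1) :=
      fun k => sub_nonneg.2 (ih (Nat.le_succ k))
    have hside : 0 ≤ p * (1 - p) := mul_nonneg hp0 (sub_nonneg.2 hp1)
    -- `X₁ - X'₁` for one Bernoulli trial is at least as likely to be `0` as to be `1`.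
    have hcentre : 0 ≤ (1 - p) ^ 2 + p ^ 2 - p * (1 - p) := by nlinarith [sq_nonneg (1 - 2 * p)]
    rcases m with _ | m
    · rw [binomAutocorr_succ_succ, binomAutocorr_succ_zero]
      nlinarith [mul_nonneg hcentre (hdec 0), mul_nonneg hside (hdec 1)]
    · rw [binomAutocorr_succ_succ, binomAutocorr_succ_succ]
      nlinarith [mul_nonneg hcentre (hdec (m + 1)), mul_nonneg hside (hdec m),
        mul_nonneg hside (hdec (m + 2)), mul_nonneg hside (hdec (m + 1))]

theorem sum_sum_binomWeight_mul_abs_sub (n : ℕ) (p : ℝ) (g : ℝ → ℝ) :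
    ∑ j ∈ range (n + 1), ∑ k ∈ range (n + 1),
        binomWeight n p j * binomWeight n p k * g |(j : ℝ) - k|
      = 2 * ∑ m ∈ range (n + 1), g m * binomAutocorr n p m - g 0 * binomAutocorr n p 0 := by
  rw [sum_range_sum_range_of_symm _ fun j k => by rw [abs_sub_comm]; ring]
  have hrow : ∀ j ∈ range (n + 1),
      ∑ k ∈ Ico j (n + 1), binomWeight n p j * binomWeight n p k * g |(j : ℝ) - k|
        = ∑ m ∈ range (n + 1), g m * (binomWeight n p j * binomWeight n p (j + m)) := by
    intro j _
    rw [sum_Ico_eq_sum_range]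
    refine sum_subset (range_subset_range.2 (Nat.sub_le _ _)) (fun m hm hm' => ?_) |>.trans ?_
    · simp only [mem_range] at hm hm'
      rw [binomWeight_eq_zero_of_lt (k := j + m) (by omega), mul_zero, zero_mul]
    · refine sum_congr rfl fun m _ => ?_
      push_cast
      rw [sub_add_cancel_left, abs_neg, Nat.abs_cast, mul_comm]
  have hdiag : ∑ j ∈ range (n + 1), binomWeight n p j * binomWeight n p j * g |(j : ℝ) - j|
      = g 0 * binomAutocorr n p 0 := by
    rw [binomAutocorr, mul_sum]
    exact sum_congr rfl fun j _ => by rw [sub_self, abs_zero, add_zero, mul_comm]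
  rw [sum_congr rfl hrow, sum_comm, hdiag, two_nsmul, two_mul]
  simp only [← mul_sum]
  rfl

theorem two_mul_sum_binomAutocorr_sub (n : ℕ) (p : ℝ) :
    2 * ∑ m ∈ range (n + 1), binomAutocorr n p m - binomAutocorr n p 0 = 1 := by
  simpa [← sum_mul_sum, sum_binomWeight] using (sum_sum_binomWeight_mul_abs_sub n p 1).symm

theorem sum_sum_binomWeight_mul_sq_sub (n : ℕ) (p : ℝ) :
    ∑ j ∈ range (n + 1), ∑ k ∈ range (n + 1),
        binomWeight n p j * binomWeight n p k * ((j : ℝ) - k) ^ 2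
      = 2 * (n * p * (1 - p)) := by
  have hcentred : ∑ k ∈ range (n + 1), binomWeight n p k * (n * p - k) = 0 := by
    simp only [mul_sub, sum_sub_distrib, ← sum_mul, sum_binomWeight, sum_binomWeight_mul_cast]
    ring
  have hexpand : ∀ j k : ℕ, binomWeight n p j * binomWeight n p k * ((j : ℝ) - k) ^ 2
      = binomWeight n p j * (binomWeight n p k * (n * p - k) ^ 2)
        + binomWeight n p j * (n * p - j) ^ 2 * binomWeight n p k
        - 2 * (binomWeight n p j * (n * p - j)) * (binomWeight n p k * (n * p - k)) := by
    intro j k; ring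
  simp only [hexpand, sum_add_distrib, sum_sub_distrib, ← mul_sum, ← sum_mul, hcentred,
    sum_binomWeight, sum_binomWeight_mul_sq_sub]
  ring

noncomputable def binomMeanAbsDiff (n : ℕ) (p q : ℝ) : ℝ :=
  ∑ j ∈ range (n + 1), ∑ k ∈ range (n + 1), binomWeight n p j * binomWeight n q k * |(j : ℝ) - k|

section MeanAbsDiff

variable {n : ℕ} {p q : ℝ}

theorem binomMeanAbsDiff_sq_le (hp0 : 0 ≤ p) (hp1 : p ≤ 1) :
    binomMeanAbsDiff n p p ^ 2 ≤ 3 / 2 * (n * p * (1 - p)) := by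
  have hfirst := sum_sum_binomWeight_mul_abs_sub n p id
  have hsecond := sum_sum_binomWeight_mul_abs_sub n p (· ^ 2)
  simp only [id, sq_abs, sum_sum_binomWeight_mul_sq_sub] at hfirst hsecond
  have key := sq_sum_mul_le_of_antitone (antitone_binomAutocorr hp0 hp1 n)
    (binomAutocorr_eq_zero_of_lt (Nat.lt_succ_self n))
  rw [two_mul_sum_binomAutocorr_sub] at key
  rw [binomMeanAbsDiff, hfirst]
  nlinarith

theorem mul_abs_sub_le_binomMeanAbsDiff (hp0 : 0 ≤ p) (hp1 : p ≤ 1) (hq0 : 0 ≤ q) (hq1 : q ≤ 1) :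
    n * |p - q| ≤ binomMeanAbsDiff n p q := by
  have hexpand : ∀ j k : ℕ, binomWeight n p j * binomWeight n q k * ((j : ℝ) - k)
      = binomWeight n p j * j * binomWeight n q k - binomWeight n p j * (binomWeight n q k * k) :=
    fun j k => by ring
  have hmean : ∑ j ∈ range (n + 1), ∑ k ∈ range (n + 1),
      binomWeight n p j * binomWeight n q k * ((j : ℝ) - k) = n * (p - q) := by
    simp only [hexpand, sum_sub_distrib, ← mul_sum, ← sum_mul, sum_binomWeight,
      sum_binomWeight_mul_cast]
    ring
  rw [← Nat.abs_cast n, ← abs_mul, ← hmean, binomMeanAbsDiff]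
  refine (abs_sum_le_sum_abs _ _).trans <| sum_le_sum fun j _ =>
    (abs_sum_le_sum_abs _ _).trans_eq <| sum_congr rfl fun k _ => ?_
  rw [abs_mul, abs_of_nonneg (mul_nonneg (binomWeight_nonneg hp0 hp1 j)
    (binomWeight_nonneg hq0 hq1 k))]

theorem le_two_mul_binomMeanAbsDiff_sub (hp0 : 0 ≤ p) (hp1 : p ≤ 1) (hq0 : 0 ≤ q) (hq1 : q ≤ 1)
    (hdiff : √(n * (p + q)) ≤ n * |p - q|) :
    1 / 16 * n * |p - q|
      ≤ 2 * binomMeanAbsDiff n p q - binomMeanAbsDiff n p p - binomMeanAbsDiff n q q := by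
  have hcross := mul_abs_sub_le_binomMeanAbsDiff (n := n) hp0 hp1 hq0 hq1
  have hA := binomMeanAbsDiff_sq_le (n := n) hp0 hp1
  have hB := binomMeanAbsDiff_sq_le (n := n) hq0 hq1
  have hD : n * (p + q) ≤ (n * |p - q|) ^ 2 := (Real.sqrt_le_iff.1 hdiff).2
  have hD0 : 0 ≤ (n : ℝ) * |p - q| := by positivity
  have hnp : 0 ≤ (n : ℝ) * p ^ 2 := by positivity
  have hnq : 0 ≤ (n : ℝ) * q ^ 2 := by positivity
  -- `(A + B)² ≤ 2 (A² + B²) ≤ 3 D²`, and `√3 ≤ 31 / 16`.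
  have hsame : binomMeanAbsDiff n p p + binomMeanAbsDiff n q q ≤ 31 / 16 * (n * |p - q|) := by
    nlinarith [sq_nonneg (binomMeanAbsDiff n p p - binomMeanAbsDiff n q q)]
  linarith

end MeanAbsDiff

theorem binomialMeasure_prod (n : ℕ) (p q : ℝ) :
    (binomialMeasure n p).prod (binomialMeasure n q) = ∑ x ∈ range (n + 1) ×ˢ range (n + 1),
      (ENNReal.ofReal (binomWeight n p x.1) * ENNReal.ofReal (binomWeight n q x.2)) •
        Measure.dirac ((x.1 : ℝ), (x.2 : ℝ)) := by
  unfold binomialMeasure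
  rw [Measure.finsetSum_prod, sum_product]
  refine sum_congr rfl fun j _ => ?_
  rw [Measure.prod_smul_left, Measure.prod_finsetSum, smul_sum]
  refine sum_congr rfl fun k _ => ?_
  rw [Measure.prod_smul_right, Measure.dirac_prod_dirac, smul_smul]
  rfl

namespace ProbabilityTheory.IndepFun

variable {Ω : Type*} [MeasurableSpace Ω] {μ : Measure Ω} [IsFiniteMeasure μ] {X X' : Ω → ℝ}
  {n : ℕ} {p q : ℝ} {f : ℝ × ℝ → ℝ}

theorem integrable_comp_of_binomial (hind : IndepFun X X' μ) (hXm : Measurable X)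
    (hX'm : Measurable X') (hX : μ.map X = binomialMeasure n p)
    (hX' : μ.map X' = binomialMeasure n q) (hf : Measurable f) :
    Integrable (fun ω => f (X ω, X' ω)) μ := by
  have hlaw := (indepFun_iff_map_prod_eq_prod_map_map hXm.aemeasurable hX'm.aemeasurable).1 hind
  rw [hX, hX', binomialMeasure_prod] at hlaw
  refine (integrable_map_measure hf.aestronglyMeasurable (hXm.prodMk hX'm).aemeasurable).1 ?_
  rw [hlaw]
  exact integrable_finsetSum_smul_dirac
    (fun _ _ => ENNReal.mul_ne_top ENNReal.ofReal_ne_top ENNReal.ofReal_ne_top) _ f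

theorem integral_comp_of_binomial (hind : IndepFun X X' μ) (hXm : Measurable X)
    (hX'm : Measurable X') (hX : μ.map X = binomialMeasure n p)
    (hX' : μ.map X' = binomialMeasure n q) (hp0 : 0 ≤ p) (hp1 : p ≤ 1) (hq0 : 0 ≤ q) (hq1 : q ≤ 1)
    (hf : Measurable f) :
    ∫ ω, f (X ω, X' ω) ∂μ = ∑ j ∈ range (n + 1), ∑ k ∈ range (n + 1),
      binomWeight n p j * binomWeight n q k * f (j, k) := by
  have hlaw := (indepFun_iff_map_prod_eq_prod_map_map hXm.aemeasurable hX'm.aemeasurable).1 hind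
  rw [hX, hX', binomialMeasure_prod] at hlaw
  rw [← integral_map (hXm.prodMk hX'm).aemeasurable hf.aestronglyMeasurable, hlaw,
    integral_finsetSum_smul_dirac
      (fun _ _ => ENNReal.mul_ne_top ENNReal.ofReal_ne_top ENNReal.ofReal_ne_top), sum_product]
  refine sum_congr rfl fun j _ => sum_congr rfl fun k _ => ?_
  rw [ENNReal.toReal_mul, ENNReal.toReal_ofReal (binomWeight_nonneg hp0 hp1 j),
    ENNReal.toReal_ofReal (binomWeight_nonneg hq0 hq1 k)]

theorem integral_abs_sub_of_binomial (hind : IndepFun X X' μ) (hXm : Measurable X)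
    (hX'm : Measurable X') (hX : μ.map X = binomialMeasure n p)
    (hX' : μ.map X' = binomialMeasure n q) (hp0 : 0 ≤ p) (hp1 : p ≤ 1) (hq0 : 0 ≤ q) (hq1 : q ≤ 1) :
    ∫ ω, |X ω - X' ω| ∂μ = binomMeanAbsDiff n p q :=
  hind.integral_comp_of_binomial hXm hX'm hX hX' hp0 hp1 hq0 hq1 (f := fun z => |z.1 - z.2|)
    (by fun_prop)

theorem integrable_abs_sub_of_binomial (hind : IndepFun X X' μ) (hXm : Measurable X)
    (hX'm : Measurable X') (hX : μ.map X = binomialMeasure n p)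
    (hX' : μ.map X' = binomialMeasure n q) : Integrable (fun ω => |X ω - X' ω|) μ :=
  hind.integrable_comp_of_binomial hXm hX'm hX hX' (f := fun z => |z.1 - z.2|) (by fun_prop)

end ProbabilityTheory.IndepFun

theorem binomial_expectation_gap_case_general {Ω : Type*} [MeasurableSpace Ω] (μ : Measure Ω)
    [IsProbabilityMeasure μ]
    (p q : ℝ) (hp : p ∈ Set.Icc (0 : ℝ) (1/4)) (hq : q ∈ Set.Icc (0 : ℝ) (1/4))
    (n : ℕ)
    (hdiff : Real.sqrt (n * (p + q)) ≤ (n : ℝ) * |p - q|)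
    (X X' Y Y' : Ω → ℝ)
    (hXm : Measurable X) (hX'm : Measurable X') (hYm : Measurable Y) (hY'm : Measurable Y')
    (hindep : iIndepFun ![X, X', Y, Y'] μ)
    (hX : Measure.map X μ = binomialMeasure n p)
    (hX' : Measure.map X' μ = binomialMeasure n p)
    (hY : Measure.map Y μ = binomialMeasure n q)
    (hY' : Measure.map Y' μ = binomialMeasure n q) :
    ∫ ω, (|X ω - Y ω| + |X' ω - Y' ω| - |X ω - X' ω| - |Y ω - Y' ω|) ∂μ ≥
      (1/16) * n * |p - q| := by
  obtain ⟨hp0, hp4⟩ := hp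
  obtain ⟨hq0, hq4⟩ := hq
  have hp1 : p ≤ 1 := by linarith
  have hq1 : q ≤ 1 := by linarith
  have hXY : IndepFun X Y μ := by simpa using hindep.indepFun (i := 0) (j := 2) (by decide)
  have hX'Y' : IndepFun X' Y' μ := by simpa using hindep.indepFun (i := 1) (j := 3) (by decide)
  have hXX' : IndepFun X X' μ := by simpa using hindep.indepFun (i := 0) (j := 1) (by decide)
  have hYY' : IndepFun Y Y' μ := by simpa using hindep.indepFun (i := 2) (j := 3) (by decide)
  have iXY := hXY.integrable_abs_sub_of_binomial hXm hYm hX hY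
  have iX'Y' := hX'Y'.integrable_abs_sub_of_binomial hX'm hY'm hX' hY'
  have iXX' := hXX'.integrable_abs_sub_of_binomial hXm hX'm hX hX'
  rw [integral_sub ?_ (hYY'.integrable_abs_sub_of_binomial hYm hY'm hY hY'),
    integral_sub ?_ iXX', integral_add iXY iX'Y',
    hXY.integral_abs_sub_of_binomial hXm hYm hX hY hp0 hp1 hq0 hq1,
    hX'Y'.integral_abs_sub_of_binomial hX'm hY'm hX' hY' hp0 hp1 hq0 hq1,
    hXX'.integral_abs_sub_of_binomial hXm hX'm hX hX' hp0 hp1 hp0 hp1,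
    hYY'.integral_abs_sub_of_binomial hYm hY'm hY hY' hq0 hq1 hq0 hq1]
  · linarith [le_two_mul_binomMeanAbsDiff_sub hp0 hp1 hq0 hq1 hdiff]
  · exact iXY.add iX'Y'
  · exact (iXY.add iX'Y').sub iXX'

theorem binomial_expectation_gap_case {Ω : Type*} [MeasurableSpace Ω] (μ : Measure Ω)
    [IsProbabilityMeasure μ]
    (p q : ℝ) (hp : p ∈ Set.Icc (0 : ℝ) (1/4)) (hq : q ∈ Set.Icc (0 : ℝ) (1/4))
    (n : ℕ) (hn : 16 ≤ n)
    (hsum : 1/2 < (n : ℝ) * (p + q)) (hdiff : Real.sqrt (n * (p + q)) ≤ (n : ℝ) * |p - q|)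
    (X X' Y Y' : Ω → ℝ)
    (hXm : Measurable X) (hX'm : Measurable X') (hYm : Measurable Y) (hY'm : Measurable Y')
    (hindep : iIndepFun ![X, X', Y, Y'] μ)
    (hX : Measure.map X μ = binomialMeasure n p)
    (hX' : Measure.map X' μ = binomialMeasure n p)
    (hY : Measure.map Y μ = binomialMeasure n q)
    (hY' : Measure.map Y' μ = binomialMeasure n q) :
    ∫ ω, (|X ω - Y ω| + |X' ω - Y' ω| - |X ω - X' ω| - |Y ω - Y' ω|) ∂μ ≥
      (1/16) * n * |p - q| :=
  binomial_expectation_gap_case_general μ p q hp hq n hdiff X X' Y Y' hXm hX'm hYm hY'm hindep hX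
    hX' hY hY'
end
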